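/- arXiv:2208.13685 — 2 statements merged into one kernel-verified Lean document; each statement's English description precedes it below -/
import Mathlib

section
/- Theorem (alignment equivalence for linear GraphSAGE over mashed ego-graphs): Let P^(0) be the initial embedding matrix of a mashed ego-graph constructed under any alignment G, and let the final center-node embedding be p_0^(K) = (A^K P^(0) W)_0 for a K-layer linear GraphSAGE with reparameterized weight W and aggregation matrix A of the fixed-shape ego-graph. Then p_0^(K) = (Σ_{j=0}^K α_j · Sum_j) W, where Sum_j is the (alignment-independent) sum of batch embeddings in layer j and α_j depends only on K and n. Consequently the final embedding of the center node is the same for any two alignments A and B. -/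
open Finset

theorem Finset.sum_comp_smul_eq_sum_smul_sum_fiberwise {ι κ R M : Type*} [DecidableEq κ]
    [Semiring R] [AddCommMonoid M] [Module R M] {s : Finset ι} {t : Finset κ} {g : ι → κ}
    (hg : ∀ i ∈ s, g i ∈ t) (α : κ → R) (f : ι → M) :
    ∑ i ∈ s, α (g i) • f i = ∑ j ∈ t, α j • ∑ i ∈ s with g i = j, f i := by
  rw [← sum_fiberwise_of_maps_to hg]
  refine sum_congr rfl fun j _ => ?_
  rw [smul_sum]
  exact sum_congr rfl fun i hi => by rw [(mem_filter.mp hi).2]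

/-- alignment equivalence for linear GraphSAGE over mashed
ego-graphs: if (i) the sum of initial embeddings over every layer group equals
an alignment-independent `Sum j`, and (ii) the center row of `A^K` is constant
`α j` on each layer `j`, then the final center-node embedding
`(A^K * P0 * W) 0` equals `(∑_j α_j • Sum_j) W`, hence is the same for any
alignment. -/
theorem linear_graphsage_alignment_equivalence
    {N d d' K : ℕ} [NeZero N]
    (A : Matrix (Fin N) (Fin N) ℝ)
    (P0 : Matrix (Fin N) (Fin d) ℝ)
    (W : Matrix (Fin d) (Fin d') ℝ)
    (layer : Fin N → ℕ)
    (hlayer : ∀ i, layer i ≤ K)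
    (Sum : ℕ → Fin d → ℝ)
    (hsum : ∀ j, ∑ i ∈ Finset.univ.filter (fun i => layer i = j), P0 i = Sum j)
    (α : ℕ → ℝ)
    (hα : ∀ i : Fin N, (A ^ K) 0 i = α (layer i)) :
    ∀ c : Fin d',
      (A ^ K * P0 * W) 0 c
        = ∑ k : Fin d, (∑ j ∈ Finset.range (K + 1), α j * Sum j k) * W k c := by
  intro c
  have hcenter : (A ^ K * P0) 0 = ∑ j ∈ range (K + 1), α j • Sum j := by
    rw [Matrix.mul_apply_eq_vecMul, Matrix.vecMul_eq_sum]
    simp only [hα]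
    -- `fun i => P0 i` retypes the rows of the matrix as vectors in `Fin d → ℝ`
    refine (sum_comp_smul_eq_sum_smul_sum_fiberwise
      (fun i _ => mem_range.mpr (Nat.lt_succ_of_le (hlayer i))) α (fun i => P0 i)).trans ?_
    simp only [hsum]
  rw [Matrix.mul_apply, hcenter]
  simp only [Finset.sum_apply, Pi.smul_apply, smul_eq_mul]
end

section
/- Single SGD-step weight divergence bound: Let ℓ_i(Φ) = Σ_{c=1}^C P_i(y=c) E_{x|y=c}[log f_c(x,Φ)] and ℓ_g(Φ) = Σ_c P_g(y=c) E_{x|y=c}[log f_c(x,Φ)]. If Φ_i' = Φ_i − η∇ℓ_i(Φ_i) and Φ_g' = Φ_g − η∇ℓ_g(Φ_g), and for each class c the map Φ ↦ ∇_Φ E_{x|y=c}[log f_c(x,Φ)] is L_{x|y=c}-Lipschitz, then ‖Φ_i' − Φ_g'‖ ≤ (1 + η L_max) ‖Φ_i − Φ_g‖ + η g_max(Φ_g) Σ_{c=1}^C |P_i(y=c) − P_g(y=c)|, where L_max = max_c L_{x|y=c} and g_max(Φ_g) = max_c ‖∇_Φ E_{x|y=c}[log f_c(x,Φ_g)]‖.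 -/
open Finset

/-- single SGD-step weight divergence bound: with
`∇ℓ_i(Φ) = ∑_c P_i(c) g_c(Φ)` and `∇ℓ_g(Φ) = ∑_c P_g(c) g_c(Φ)`, each `g_c`
`L_c`-Lipschitz, one SGD step satisfies
`‖Φ_i' − Φ_g'‖ ≤ (1 + η L_max) ‖Φ_i − Φ_g‖ + η g_max(Φ_g) ∑_c |P_i(c) − P_g(c)|`. -/
theorem sgd_step_weight_divergence_bound
    {E : Type*} [NormedAddCommGroup E] [NormedSpace ℝ E]
    {C : ℕ} (hC : 0 < C)
    (Pi Pg : Fin C → ℝ)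
    (hPi : ∀ c, 0 ≤ Pi c) (hPi1 : ∑ c, Pi c = 1)
    (hPg : ∀ c, 0 ≤ Pg c) (hPg1 : ∑ c, Pg c = 1)
    (g : Fin C → E → E) (L : Fin C → ℝ)
    (hLip : ∀ c, ∀ u v : E, ‖g c u - g c v‖ ≤ L c * ‖u - v‖)
    (η : ℝ) (hη : 0 < η)
    (Φi Φg Φi' Φg' : E)
    (hi : Φi' = Φi - η • ∑ c, Pi c • g c Φi)
    (hg : Φg' = Φg - η • ∑ c, Pg c • g c Φg) :
    ‖Φi' - Φg'‖
      ≤ (1 + η * (univ.sup' (univ_nonempty_iff.mpr ⟨⟨0, hC⟩⟩) L)) * ‖Φi - Φg‖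
        + η * (univ.sup' (univ_nonempty_iff.mpr ⟨⟨0, hC⟩⟩) fun c => ‖g c Φg‖)
            * ∑ c, |Pi c - Pg c| := by
  have hne : (univ : Finset (Fin C)).Nonempty := univ_nonempty_iff.mpr ⟨⟨0, hC⟩⟩
  set Lmax := univ.sup' (univ_nonempty_iff.mpr ⟨⟨0, hC⟩⟩) L with hLmax
  set Gmax := univ.sup' (univ_nonempty_iff.mpr ⟨⟨0, hC⟩⟩) (fun c => ‖g c Φg‖) with hGmax
  have hLle : ∀ c, L c ≤ Lmax := fun c => le_sup' L (mem_univ c)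
  have hGle : ∀ c, ‖g c Φg‖ ≤ Gmax := fun c => le_sup' (fun c => ‖g c Φg‖) (mem_univ c)
  subst hi hg
  have key : (Φi - η • ∑ c, Pi c • g c Φi) - (Φg - η • ∑ c, Pg c • g c Φg)
      = (Φi - Φg) - η • ((∑ c, Pi c • (g c Φi - g c Φg))
          + ∑ c, (Pi c - Pg c) • g c Φg) := by
    have hsum : (∑ c, Pi c • g c Φi) - (∑ c, Pg c • g c Φg)
        = (∑ c, Pi c • (g c Φi - g c Φg)) + ∑ c, (Pi c - Pg c) • g c Φg := by
      rw [← Finset.sum_add_distrib, ← Finset.sum_sub_distrib]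
      apply Finset.sum_congr rfl
      intro c _
      rw [smul_sub, sub_smul]
      abel
    rw [← hsum, smul_sub]
    abel
  rw [key]
  have h1 : ‖(∑ c, Pi c • (g c Φi - g c Φg))‖ ≤ Lmax * ‖Φi - Φg‖ := by
    calc ‖(∑ c, Pi c • (g c Φi - g c Φg))‖
        ≤ ∑ c, ‖Pi c • (g c Φi - g c Φg)‖ := norm_sum_le _ _
      _ ≤ ∑ c, Pi c * (Lmax * ‖Φi - Φg‖) := by
          apply Finset.sum_le_sum
          intro c _
          rw [norm_smul, Real.norm_eq_abs, abs_of_nonneg (hPi c)]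
          apply mul_le_mul_of_nonneg_left _ (hPi c)
          calc ‖g c Φi - g c Φg‖ ≤ L c * ‖Φi - Φg‖ := hLip c _ _
            _ ≤ Lmax * ‖Φi - Φg‖ :=
              mul_le_mul_of_nonneg_right (hLle c) (norm_nonneg _)
      _ = Lmax * ‖Φi - Φg‖ := by rw [← Finset.sum_mul, hPi1, one_mul]
  have h2 : ‖(∑ c, (Pi c - Pg c) • g c Φg)‖ ≤ Gmax * ∑ c, |Pi c - Pg c| := by
    calc ‖(∑ c, (Pi c - Pg c) • g c Φg)‖
        ≤ ∑ c, ‖(Pi c - Pg c) • g c Φg‖ := norm_sum_le _ _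
      _ ≤ ∑ c, |Pi c - Pg c| * Gmax := by
          apply Finset.sum_le_sum
          intro c _
          rw [norm_smul, Real.norm_eq_abs]
          exact mul_le_mul_of_nonneg_left (hGle c) (abs_nonneg _)
      _ = Gmax * ∑ c, |Pi c - Pg c| := by rw [← Finset.sum_mul, mul_comm]
  calc ‖(Φi - Φg) - η • ((∑ c, Pi c • (g c Φi - g c Φg))
          + ∑ c, (Pi c - Pg c) • g c Φg)‖
      ≤ ‖Φi - Φg‖ + ‖η • ((∑ c, Pi c • (g c Φi - g c Φg))
          + ∑ c, (Pi c - Pg c) • g c Φg)‖ := norm_sub_le _ _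
    _ ≤ ‖Φi - Φg‖ + η * (Lmax * ‖Φi - Φg‖ + Gmax * ∑ c, |Pi c - Pg c|) := by
        gcongr
        rw [norm_smul, Real.norm_eq_abs, abs_of_pos hη]
        apply mul_le_mul_of_nonneg_left _ hη.le
        exact (norm_add_le _ _).trans (add_le_add h1 h2)
    _ = (1 + η * Lmax) * ‖Φi - Φg‖ + η * Gmax * ∑ c, |Pi c - Pg c| := by ring
end
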